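/- Let d ≥ 1, let 0 ≤ a < b, let L > 0, and let ψ ∈ L²(ℝ^d) be a real-valued function vanishing almost everywhere outside the spherical layer {x : a ≤ |x| ≤ b}. For c ∈ ℝ set f(c) = ∫_{| |x| − c | < L} |ψ(x)|² dx, and suppose c ∈ [a,b] is a point at which f attains its maximum over [a,b]. Define φ : ℝ^d → ℝ by φ(x) = 1 if ||x| − c| < L, φ(x) = 0 if ||x| − c| ≥ 3L, and φ(x) = 3/2 − ||x| − c|/(2L) otherwise. Then ∫_{ℝ^d} |∇φ(x)|² ψ(x)² dx ≤ (1/(2L²)) ∫_{ℝ^d} |φ(x) ψ(x)|² dx. -/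

import Mathlib

/-!
The cutoff is `φ x = plateauCutoff c L ‖x‖` for a `1/(2L)`-Lipschitz profile that is locally
constant away from the null spheres `||x| - c| ∈ {L, 3L}`, so almost everywhere
`|∇φ|² ≤ (2L)⁻² 𝟙_T` with `T = {L < ||x| - c| < 3L}`. The region `T` is the disjoint union of
the layers of half-width `L` centred at `c ± 2L`. Since `ψ` vanishes outside `{a ≤ |x| ≤ b}`,
moving the centre of a layer to the nearest point of `[a, b]` does not decrease its `ψ²`-mass, so
`c` maximizes this mass among all centres. Hence `∫_T ψ² ≤ 2 ∫_{||x|-c|<L} ψ²`, and on that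
layer `ψ² = (φψ)²`.
-/

open MeasureTheory Set Filter Topology

lemma lt_abs_sub_and_abs_sub_lt_iff (c L t : ℝ) :
    (L < |t - c| ∧ |t - c| < 3 * L) ↔ |t - (c + 2 * L)| < L ∨ |t - (c - 2 * L)| < L := by
  rcases abs_cases (t - c) with ⟨h, -⟩ | ⟨h, -⟩ <;> simp only [h, abs_lt] <;> grind

lemma abs_sub_projIcc_lt {a b c t L : ℝ} (hab : a ≤ b) (ht : t ∈ Icc a b) (htc : |t - c| < L) :
    |t - projIcc a b hab c| < L :=
  calc |t - projIcc a b hab c| = |(projIcc a b hab t : ℝ) - projIcc a b hab c| := by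
        rw [projIcc_of_mem hab ht]
    _ ≤ |t - c| := abs_projIcc_sub_projIcc hab
    _ < L := htc

noncomputable def plateauCutoff (c L t : ℝ) : ℝ :=
  if |t - c| < L then 1 else if 3 * L ≤ |t - c| then 0 else 3 / 2 - |t - c| / (2 * L)

section PlateauCutoff

variable {c L : ℝ}

lemma plateauCutoff_eq_one_of_abs_sub_lt {t : ℝ} (h : |t - c| < L) : plateauCutoff c L t = 1 :=
  if_pos h

lemma plateauCutoff_eq_zero_of_le_abs_sub {t : ℝ} (hL : 0 < L) (h : 3 * L ≤ |t - c|) :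
    plateauCutoff c L t = 0 := by
  rw [plateauCutoff, if_neg (by linarith), if_pos h]

lemma plateauCutoff_eq_projIcc (hL : 0 < L) (t : ℝ) :
    plateauCutoff c L t = projIcc 0 1 zero_le_one (3 / 2 - |t - c| / (2 * L)) := by
  have h2L : 0 < 2 * L := by positivity
  unfold plateauCutoff
  split_ifs with h₁ h₃
  · rw [projIcc_of_right_le]
    rw [le_sub_comm, div_le_iff₀ h2L]; linarith
  · rw [projIcc_of_le_left]
    rw [sub_nonpos, le_div_iff₀ h2L]; linarith
  · rw [projIcc_of_mem]
    constructor
    · rw [sub_nonneg, div_le_iff₀ h2L]; linarith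
    · rw [sub_le_comm, le_div_iff₀ h2L]; linarith

lemma plateauCutoff_mem_Icc (hL : 0 < L) (t : ℝ) : plateauCutoff c L t ∈ Icc 0 1 := by
  rw [plateauCutoff_eq_projIcc hL]
  exact Subtype.prop _

lemma lipschitzWith_plateauCutoff (hL : 0 < L) :
    LipschitzWith (Real.toNNReal (1 / (2 * L))) (plateauCutoff c L) := by
  refine LipschitzWith.of_dist_le_mul fun s t => ?_
  rw [Real.coe_toNNReal _ (by positivity), Real.dist_eq, Real.dist_eq,
    plateauCutoff_eq_projIcc hL, plateauCutoff_eq_projIcc hL]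
  calc _ ≤ |(3 / 2 - |s - c| / (2 * L)) - (3 / 2 - |t - c| / (2 * L))| :=
        abs_projIcc_sub_projIcc zero_le_one
    _ = |(|t - c| - |s - c|)| / (2 * L) := by
        rw [sub_sub_sub_cancel_left, ← sub_div, abs_div, abs_of_pos (by positivity : 0 < 2 * L)]
    _ ≤ |s - t| / (2 * L) := by
        gcongr ?_ / _
        simpa only [sub_sub_sub_cancel_right, abs_sub_comm t s] using
          abs_abs_sub_abs_le_abs_sub (t - c) (s - c)
    _ = 1 / (2 * L) * |s - t| := by ring

end PlateauCutoff

lemma integrable_plateauCutoff_mul_sq {E : Type*} [NormedAddCommGroup E] [MeasurableSpace E]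
    [OpensMeasurableSpace E] {μ : Measure E} {c L : ℝ} (hL : 0 < L) {ψ : E → ℝ}
    (hψ : Integrable (fun x => ψ x ^ 2) μ) :
    Integrable (fun x => (plateauCutoff c L ‖x‖ * ψ x) ^ 2) μ := by
  simp_rw [mul_pow]
  refine hψ.bdd_mul (c := 1) (((lipschitzWith_plateauCutoff hL).continuous.comp
    continuous_norm).pow 2).aestronglyMeasurable (ae_of_all _ fun x => ?_)
  obtain ⟨h₀, h₁⟩ := plateauCutoff_mem_Icc (c := c) hL ‖x‖
  rw [norm_pow, Real.norm_of_nonneg h₀]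
  exact pow_le_one₀ h₀ h₁

lemma LipschitzWith.norm_gradient_le {𝕜 F : Type*} [RCLike 𝕜] [NormedAddCommGroup F]
    [InnerProductSpace 𝕜 F] [CompleteSpace F] {f : F → 𝕜} {K : NNReal} (hf : LipschitzWith K f)
    (x : F) : ‖gradient f x‖ ≤ K := by
  rw [gradient, LinearIsometryEquiv.norm_map]
  exact norm_fderiv_le_of_lipschitz 𝕜 hf

lemma ae_abs_norm_sub_ne {E : Type*} [NormedAddCommGroup E] [NormedSpace ℝ E] [MeasurableSpace E]
    [BorelSpace E] [FiniteDimensional ℝ E] [Nontrivial E] (μ : Measure E) [μ.IsAddHaarMeasure]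
    (c r : ℝ) : ∀ᵐ x ∂μ, |‖x‖ - c| ≠ r := by
  refine measure_mono_null (fun x hx => ?_)
    (measure_union_null (μ.addHaar_sphere 0 (c + r)) (μ.addHaar_sphere 0 (c - r)))
  replace hx : |‖x‖ - c| = r := by simpa using hx
  rw [mem_union, mem_sphere_zero_iff_norm, mem_sphere_zero_iff_norm]
  rcases abs_choice (‖x‖ - c) with h | h
  · left; linarith
  · right; linarith

lemma ae_norm_gradient_plateauCutoff_le {E : Type*} [NormedAddCommGroup E]
    [InnerProductSpace ℝ E] [FiniteDimensional ℝ E] [Nontrivial E] [MeasurableSpace E]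
    [BorelSpace E] (μ : Measure E) [μ.IsAddHaarMeasure] {c L : ℝ} (hL : 0 < L) :
    ∀ᵐ x ∂μ, ‖gradient (fun y => plateauCutoff c L ‖y‖) x‖
      ≤ {x | L < |‖x‖ - c| ∧ |‖x‖ - c| < 3 * L}.indicator (fun _ => 1 / (2 * L)) x := by
  have hρ : Continuous fun y : E => |‖y‖ - c| := by fun_prop
  filter_upwards [ae_abs_norm_sub_ne μ c L, ae_abs_norm_sub_ne μ c (3 * L)] with x h₁ h₃
  by_cases hx : x ∈ {x : E | L < |‖x‖ - c| ∧ |‖x‖ - c| < 3 * L}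
  · rw [indicator_of_mem hx]
    simpa only [Real.coe_toNNReal _ (by positivity : 0 ≤ 1 / (2 * L)), mul_one, NNReal.coe_mul,
      NNReal.coe_one, Function.comp_def] using
      ((lipschitzWith_plateauCutoff (c := c) hL).comp lipschitzWith_one_norm).norm_gradient_le x
  · have hout : |‖x‖ - c| < L ∨ 3 * L < |‖x‖ - c| := by rw [mem_ofPred_eq] at hx; grind
    have hconst :
        (fun y : E => plateauCutoff c L ‖y‖) =ᶠ[𝓝 x] fun _ => plateauCutoff c L ‖x‖ := by
      rcases hout with h | h
      · filter_upwards [(isOpen_lt hρ continuous_const).mem_nhds h] with y hy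
        rw [plateauCutoff_eq_one_of_abs_sub_lt hy, plateauCutoff_eq_one_of_abs_sub_lt h]
      · filter_upwards [(isOpen_lt continuous_const hρ).mem_nhds h] with y hy
        rw [plateauCutoff_eq_zero_of_le_abs_sub hL hy.le,
          plateauCutoff_eq_zero_of_le_abs_sub hL h.le]
    rw [indicator_of_notMem hx, hconst.gradient_eq, gradient_fun_const, norm_zero]

section Shells

variable {E : Type*} [NormedAddCommGroup E] [MeasurableSpace E] [OpensMeasurableSpace E]
  {μ : Measure E} {f : E → ℝ}

lemma setIntegral_shell_le_of_isMaxOn {a b c L : ℝ} (hab : a ≤ b) (hf : Integrable f μ)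
    (hf0 : 0 ≤ f) (hsupp : ∀ᵐ x ∂μ, ¬(a ≤ ‖x‖ ∧ ‖x‖ ≤ b) → f x = 0)
    (hmax : IsMaxOn (fun c' => ∫ x in {x | |‖x‖ - c'| < L}, f x ∂μ) (Icc a b) c) (c' : ℝ) :
    ∫ x in {x | |‖x‖ - c'| < L}, f x ∂μ ≤ ∫ x in {x | |‖x‖ - c| < L}, f x ∂μ := by
  set layer := {x : E | a ≤ ‖x‖ ∧ ‖x‖ ≤ b}
  set p := projIcc a b hab c'
  have hmeas : MeasurableSet {x : E | |‖x‖ - c'| < L} :=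
    measurableSet_lt (by fun_prop) measurable_const
  calc ∫ x in {x | |‖x‖ - c'| < L}, f x ∂μ = ∫ x in {x | |‖x‖ - c'| < L} ∩ layer, f x ∂μ :=
        setIntegral_eq_of_subset_of_ae_sdiff_eq_zero hmeas.nullMeasurableSet inter_subset_left
          (hsupp.mono fun x hx hx' => hx fun h => hx'.2 ⟨hx'.1, h⟩)
    _ ≤ ∫ x in {x | |‖x‖ - p| < L}, f x ∂μ :=
        setIntegral_mono_set hf.integrableOn (ae_of_all _ hf0)
          (Eventually.of_forall fun x hx => abs_sub_projIcc_lt hab hx.2 hx.1)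
    _ ≤ ∫ x in {x | |‖x‖ - c| < L}, f x ∂μ := hmax p.2

lemma setIntegral_transition_le_two_mul {c L : ℝ} (hf : Integrable f μ)
    (hmax : ∀ c', ∫ x in {x | |‖x‖ - c'| < L}, f x ∂μ ≤ ∫ x in {x | |‖x‖ - c| < L}, f x ∂μ) :
    ∫ x in {x | L < |‖x‖ - c| ∧ |‖x‖ - c| < 3 * L}, f x ∂μ
      ≤ 2 * ∫ x in {x | |‖x‖ - c| < L}, f x ∂μ := by
  have hsplit : {x : E | L < |‖x‖ - c| ∧ |‖x‖ - c| < 3 * L}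
      = {x | |‖x‖ - (c + 2 * L)| < L} ∪ {x | |‖x‖ - (c - 2 * L)| < L} := by
    ext x
    exact lt_abs_sub_and_abs_sub_lt_iff c L ‖x‖
  have hdisj : Disjoint {x : E | |‖x‖ - (c + 2 * L)| < L} {x | |‖x‖ - (c - 2 * L)| < L} :=
    disjoint_left.2 fun x hp hm => by
      rw [mem_ofPred_eq, abs_lt] at hp hm
      linarith [hp.1, hm.2]
  rw [hsplit, setIntegral_union hdisj (measurableSet_lt (by fun_prop) measurable_const)
    hf.integrableOn hf.integrableOn]
  exact (add_le_add (hmax _) (hmax _)).trans_eq (two_mul _).symm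

end Shells

lemma integral_norm_gradient_plateauCutoff_sq_mul_le {E : Type*} [NormedAddCommGroup E]
    [InnerProductSpace ℝ E] [FiniteDimensional ℝ E] [Nontrivial E] [MeasurableSpace E]
    [BorelSpace E] (μ : Measure E) [μ.IsAddHaarMeasure] {c L : ℝ} (hL : 0 < L) {g : E → ℝ}
    (hg : Integrable g μ) (hg0 : 0 ≤ g) :
    ∫ x, ‖gradient (fun y => plateauCutoff c L ‖y‖) x‖ ^ 2 * g x ∂μ
      ≤ (1 / (2 * L)) ^ 2 * ∫ x in {x | L < |‖x‖ - c| ∧ |‖x‖ - c| < 3 * L}, g x ∂μ := by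
  have hρ : Continuous fun x : E => |‖x‖ - c| := by fun_prop
  have hgrad := ae_norm_gradient_plateauCutoff_le μ (c := c) hL
  set T := {x : E | L < |‖x‖ - c| ∧ |‖x‖ - c| < 3 * L}
  have hT : MeasurableSet T :=
    ((isOpen_lt continuous_const hρ).inter (isOpen_lt hρ continuous_const)).measurableSet
  rw [← integral_const_mul, ← integral_indicator hT]
  refine integral_mono_of_nonneg (ae_of_all _ fun x => mul_nonneg (by positivity) (hg0 x))
    ((hg.const_mul _).indicator hT) ?_
  filter_upwards [hgrad] with x hx
  by_cases hxT : x ∈ T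
  · simp only [indicator_of_mem hxT] at hx ⊢
    gcongr
    exact hg0 x
  · simp only [indicator_of_notMem hxT, norm_le_zero_iff] at hx ⊢
    rw [hx, norm_zero, sq, zero_mul, zero_mul]

theorem cutoff_estimate_general
    (d : ℕ) (hd : 1 ≤ d) (a b L : ℝ) (hab : a < b) (hL : 0 < L)
    (ψ : EuclideanSpace ℝ (Fin d) → ℝ) (hψL2 : MemLp ψ 2 (volume : Measure (EuclideanSpace ℝ (Fin d))))
    (hψsupp : ∀ᵐ x : EuclideanSpace ℝ (Fin d) ∂volume, ¬(a ≤ ‖x‖ ∧ ‖x‖ ≤ b) → ψ x = 0)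
    (c : ℝ)
    (hmax : ∀ c' ∈ Set.Icc a b,
      (∫ x in {x : EuclideanSpace ℝ (Fin d) | |‖x‖ - c'| < L}, (ψ x) ^ 2)
        ≤ ∫ x in {x : EuclideanSpace ℝ (Fin d) | |‖x‖ - c| < L}, (ψ x) ^ 2)
    (φ : EuclideanSpace ℝ (Fin d) → ℝ)
    (hφ : ∀ x : EuclideanSpace ℝ (Fin d),
      φ x = if |‖x‖ - c| < L then 1
            else if 3 * L ≤ |‖x‖ - c| then 0
            else 3 / 2 - |‖x‖ - c| / (2 * L)) :
    ∫ x : EuclideanSpace ℝ (Fin d), ‖gradient φ x‖ ^ 2 * (ψ x) ^ 2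
      ≤ (1 / (2 * L ^ 2)) * ∫ x : EuclideanSpace ℝ (Fin d), (φ x * ψ x) ^ 2 := by
  have : Nontrivial (EuclideanSpace ℝ (Fin d)) :=
    Module.nontrivial_of_finrank_pos (R := ℝ) (by rw [finrank_euclideanSpace_fin]; omega)
  obtain rfl : φ = fun x => plateauCutoff c L ‖x‖ := funext hφ
  have hψ2 : Integrable (fun x => ψ x ^ 2) := (memLp_two_iff_integrable_sq hψL2.1).1 hψL2
  have hglobal := setIntegral_shell_le_of_isMaxOn hab.le hψ2 (fun x => sq_nonneg (ψ x))
    (hψsupp.mono fun x hx hx' => by rw [hx hx', sq, zero_mul]) hmax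
  have hφψ_shell : ∫ x in {x | |‖x‖ - c| < L}, (plateauCutoff c L ‖x‖ * ψ x) ^ 2
      = ∫ x in {x | |‖x‖ - c| < L}, ψ x ^ 2 :=
    setIntegral_congr_fun (measurableSet_lt (by fun_prop) measurable_const) fun x hx => by
      rw [plateauCutoff_eq_one_of_abs_sub_lt hx, one_mul]
  calc ∫ x, ‖gradient (fun y => plateauCutoff c L ‖y‖) x‖ ^ 2 * ψ x ^ 2
      ≤ (1 / (2 * L)) ^ 2 * ∫ x in {x | L < |‖x‖ - c| ∧ |‖x‖ - c| < 3 * L}, ψ x ^ 2 :=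
        integral_norm_gradient_plateauCutoff_sq_mul_le volume hL hψ2 fun x => sq_nonneg (ψ x)
    _ ≤ (1 / (2 * L)) ^ 2 * (2 * ∫ x in {x | |‖x‖ - c| < L}, ψ x ^ 2) := by
        gcongr
        exact setIntegral_transition_le_two_mul hψ2 hglobal
    _ = 1 / (2 * L ^ 2) * ∫ x in {x | |‖x‖ - c| < L}, (plateauCutoff c L ‖x‖ * ψ x) ^ 2 := by
        rw [hφψ_shell]
        field_simp
    _ ≤ 1 / (2 * L ^ 2) * ∫ x, (plateauCutoff c L ‖x‖ * ψ x) ^ 2 :=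
        mul_le_mul_of_nonneg_left
          (setIntegral_le_integral (integrable_plateauCutoff_mul_sq hL hψ2)
            (ae_of_all _ fun x => sq_nonneg _))
          (by positivity)

/-- The key cutoff estimate (inequality (RD)) in the proof of Lemma 3.2: for `ψ ∈ L²`
supported in the spherical layer `{a ≤ |x| ≤ b}`, if `c ∈ [a,b]` maximizes
`c' ↦ ∫_{||x|-c'|<L} |ψ|²` over `[a,b]`, and `φ` is the radial piecewise-linear cutoff
equal to `1` on `{||x|-c| < L}` and `0` on `{||x|-c| ≥ 3L}`, then
`∫ |∇φ|² ψ² ≤ (1/(2L²)) ∫ |φψ|²`. -/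
theorem cutoff_estimate
    (d : ℕ) (hd : 1 ≤ d) (a b L : ℝ) (ha : 0 ≤ a) (hab : a < b) (hL : 0 < L)
    (ψ : EuclideanSpace ℝ (Fin d) → ℝ) (hψL2 : MemLp ψ 2 (volume : Measure (EuclideanSpace ℝ (Fin d))))
    (hψsupp : ∀ᵐ x : EuclideanSpace ℝ (Fin d) ∂volume, ¬(a ≤ ‖x‖ ∧ ‖x‖ ≤ b) → ψ x = 0)
    (c : ℝ) (hc : c ∈ Set.Icc a b)
    (hmax : ∀ c' ∈ Set.Icc a b,
      (∫ x in {x : EuclideanSpace ℝ (Fin d) | |‖x‖ - c'| < L}, (ψ x) ^ 2)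
        ≤ ∫ x in {x : EuclideanSpace ℝ (Fin d) | |‖x‖ - c| < L}, (ψ x) ^ 2)
    (φ : EuclideanSpace ℝ (Fin d) → ℝ)
    (hφ : ∀ x : EuclideanSpace ℝ (Fin d),
      φ x = if |‖x‖ - c| < L then 1
            else if 3 * L ≤ |‖x‖ - c| then 0
            else 3 / 2 - |‖x‖ - c| / (2 * L)) :
    ∫ x : EuclideanSpace ℝ (Fin d), ‖gradient φ x‖ ^ 2 * (ψ x) ^ 2
      ≤ (1 / (2 * L ^ 2)) * ∫ x : EuclideanSpace ℝ (Fin d), (φ x * ψ x) ^ 2 :=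
  cutoff_estimate_general d hd a b L hab hL ψ hψL2 hψsupp c hmax φ hφ
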